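/- Let G be a simple graph on a finite vertex type and let v be a vertex of G. Then the permanental polynomial of the adjacency matrix satisfies ψ(A(G)) = x·ψ(A(G − v)) + Σ_{u ∈ N(v)} ψ(A(G − u − v)) + 2·Σ_{C ∈ 𝔠_G(v)} (−1)^{|V(C)|}·ψ(A(G − V(C))). -/

import Mathlib

open Polynomial Matrix

attribute [local instance] Classical.propDecidable

noncomputable section

/-- The permanent of a square matrix: `per M = ∑_{σ} ∏_i M i (σ i)`. -/
def Matrix.per {n R : Type*} [Fintype n] [DecidableEq n] [CommRing R]
    (M : Matrix n n R) : R :=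
  ∑ σ : Equiv.Perm n, ∏ i, M i (σ i)

/-- The characteristic polynomial `φ(M) = det (x·I - M)`. -/
def phi {n R : Type*} [Fintype n] [DecidableEq n] [CommRing R]
    (M : Matrix n n (Polynomial R)) : Polynomial R :=
  ((Polynomial.X : Polynomial R) • (1 : Matrix n n (Polynomial R)) - M).det

/-- The permanental polynomial `ψ(M) = per (x·I - M)`. -/
def psi {n R : Type*} [Fintype n] [DecidableEq n] [CommRing R]
    (M : Matrix n n (Polynomial R)) : Polynomial R :=
  ((Polynomial.X : Polynomial R) • (1 : Matrix n n (Polynomial R)) - M).per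

variable {V : Type*}

/-- The principal submatrix of `M` obtained by deleting the rows and columns indexed by `S`. -/
def delSub {R : Type*} (M : Matrix V V R) (S : Set V) :
    Matrix {w : V // w ∉ S} {w : V // w ∉ S} R :=
  M.submatrix Subtype.val Subtype.val

/-- `C` is a cycle of `G`: a subgraph of `G` that is connected, has nonempty vertex set,
and in which every vertex of `C` has degree exactly `2` in `C`. -/
def IsCycleSub (G : SimpleGraph V) (C : G.Subgraph) : Prop :=
  C.Connected ∧ C.verts.Nonempty ∧ ∀ w ∈ C.verts, (C.neighborSet w).ncard = 2

variable [Fintype V] [DecidableEq V]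

/-- The degree diagonal matrix `D(G)` of a graph. -/
def degMat (R : Type*) [CommRing R] (G : SimpleGraph V) [DecidableRel G.Adj] :
    Matrix V V R :=
  Matrix.diagonal fun w => (G.degree w : R)

/-!
Expand `per (x·I - A)` over permutations `σ` and group them by the cycle `c` of `σ` through `v`:
the rest of `σ` is an arbitrary permutation of the vertices off `c ∪ {v}`, which contributes
`ψ(A(G - (c ∪ {v})))`. A fixed `v` contributes `x`; a transposition `(v u)` contributes
`A_vu·A_uv = [u ∈ N(v)]`; a longer cycle contributes `(-1)^{|c|}` if each step `w ↦ c w` is an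
edge of `G` and `0` otherwise. The subgraph traced out by such a cyclic permutation is a cycle of
`G` through `v`, and every such cycle arises from exactly two permutations, its two orientations.
-/

open Equiv Finset

def cyclesThrough (v : V) : Finset (Perm V) :=
  univ.filter fun c => c.IsCycle ∧ c v ≠ v

theorem mem_cyclesThrough {v : V} {c : Perm V} : c ∈ cyclesThrough v ↔ c.IsCycle ∧ c v ≠ v := by
  simp [cyclesThrough]

section Permanent

variable {R : Type*} [CommRing R]

theorem per_delSub_eq_sum_fixing (M : Matrix V V R) (S : Finset V) :
    (delSub M ↑S).per =
      ∑ τ ∈ univ.filter (fun τ : Perm V => ∀ a ∈ S, τ a = a), ∏ i ∈ Sᶜ, M i (τ i) := by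
  have hS : ∀ τ : Perm V, τ ∈ univ.filter (fun τ : Perm V => ∀ a ∈ S, τ a = a) ↔
      ∀ a, ¬a ∉ (↑S : Set V) → τ a = a := by simp
  rw [Matrix.per, sum_subtype _ hS]
  refine Fintype.sum_equiv (Perm.subtypeEquivSubtypePerm _) _ _ fun f => ?_
  rw [prod_subtype Sᶜ (p := (· ∉ (↑S : Set V))) (by simp)]
  refine Fintype.prod_congr _ _ fun i => ?_
  rw [Perm.subtypeEquivSubtypePerm_apply_of_mem f i.2]
  rfl

theorem prod_apply_mul_eq_mul_prod_compl (M : Matrix V V R) {c τ : Perm V} {S : Finset V}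
    (hc : c.support ⊆ S) (hτ : ∀ a ∈ S, τ a = a) :
    ∏ i, M i ((c * τ) i) = (∏ i ∈ S, M i (c i)) * ∏ i ∈ Sᶜ, M i (τ i) := by
  rw [← prod_mul_prod_compl S]
  congr 1
  · refine prod_congr rfl fun i hi => ?_
    rw [Perm.mul_apply, hτ i hi]
  · refine prod_congr rfl fun i hi => ?_
    have hτi : τ i ∉ S := fun h => mem_compl.1 hi (τ.injective (hτ _ h) ▸ h)
    rw [Perm.mul_apply, Perm.notMem_support.1 fun h => hτi (hc h)]

theorem cycleOf_mem_insert_one_cyclesThrough (σ : Perm V) (v : V) :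
    σ.cycleOf v ∈ insert 1 (cyclesThrough v) := by
  by_cases h : σ v = v
  · simp [h]
  · simp [mem_cyclesThrough, σ.isCycle_cycleOf h, h]

theorem cycleOf_mul_eq_left {c τ : Perm V} {v : V}
    (hc : c ∈ insert 1 (cyclesThrough v))
    (hτ : ∀ a ∈ insert v c.support, τ a = a) : (c * τ).cycleOf v = c := by
  have hτv : τ v = v := hτ v (mem_insert_self _ _)
  rcases mem_insert.1 hc with rfl | hc
  · simpa using hτv
  · obtain ⟨hcyc, hcv⟩ := mem_cyclesThrough.1 hc
    have hdisj : c.Disjoint τ := fun a =>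
      or_iff_not_imp_left.2 fun ha => hτ a (mem_insert_of_mem (Perm.mem_support.2 ha))
    rw [Perm.cycleOf_mul_of_apply_right_eq_self hdisj.commute v hτv, hcyc.cycleOf_eq hcv]

theorem inv_cycleOf_mul_apply {σ : Perm V} {v a : V} (ha : a ∈ insert v (σ.cycleOf v).support) :
    ((σ.cycleOf v)⁻¹ * σ) a = a := by
  rw [Perm.mul_apply, Perm.inv_eq_iff_eq]
  rcases mem_insert.1 ha with rfl | ha
  · exact (Perm.cycleOf_apply_self σ a).symm
  · exact ((Perm.mem_support_cycleOf_iff.1 ha).1).cycleOf_apply.symm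

theorem per_eq_sum_cycleOf (M : Matrix V V R) (v : V) :
    M.per = ∑ c ∈ insert 1 (cyclesThrough v),
      (∏ i ∈ insert v c.support, M i (c i)) * (delSub M ↑(insert v c.support)).per := by
  rw [Matrix.per,
    ← sum_fiberwise_of_maps_to fun σ _ => cycleOf_mem_insert_one_cyclesThrough σ v]
  refine sum_congr rfl fun c hc => ?_
  rw [per_delSub_eq_sum_fixing, mul_sum]
  refine sum_nbij' (c⁻¹ * ·) (c * ·) ?_ ?_ ?_ ?_ ?_
  · intro σ hσ
    obtain rfl := (mem_filter.1 hσ).2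
    exact mem_filter.2 ⟨mem_univ _, fun a ha => inv_cycleOf_mul_apply ha⟩
  · intro τ hτ
    exact mem_filter.2 ⟨mem_univ _, cycleOf_mul_eq_left hc (mem_filter.1 hτ).2⟩
  · intro σ _
    exact mul_inv_cancel_left c σ
  · intro τ _
    exact inv_mul_cancel_left c τ
  · intro σ hσ
    obtain rfl := (mem_filter.1 hσ).2
    conv_lhs => rw [← mul_inv_cancel_left (σ.cycleOf v) σ]
    exact prod_apply_mul_eq_mul_prod_compl M (subset_insert _ _) fun a ha =>
      inv_cycleOf_mul_apply ha

end Permanent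

section PermanentalPolynomial

variable {R : Type*} [CommRing R]

/- The `Fintype` instances on `{w // w ∉ S}` coming from classical and from `Finset` decidability
of membership are not defeq; the next two lemmas are stated to be insensitive to them. -/
theorem psi_delSub_congr {W : Type*} (A : Matrix W W R[X]) {S S' : Set W} (h : S = S')
    {ft : Fintype {w // w ∉ S}} {de : DecidableEq {w // w ∉ S}}
    {ft' : Fintype {w // w ∉ S'}} {de' : DecidableEq {w // w ∉ S'}} :
    @psi _ R ft de _ (delSub A S) = @psi _ R ft' de' _ (delSub A S') := by
  subst h
  congr <;> exact Subsingleton.elim _ _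

theorem psi_delSub {W : Type*} [DecidableEq W] (A : Matrix W W R[X]) (S : Set W)
    [Fintype {w // w ∉ S}] :
    psi (delSub A S) = (delSub ((X : R[X]) • (1 : Matrix W W R[X]) - A) S).per := by
  rw [psi, delSub, delSub, ← submatrix_one _ Subtype.val_injective]
  rfl

theorem prod_smul_one_sub_adjMatrix_apply (G : SimpleGraph V) [DecidableRel G.Adj] (x : R)
    (c : Perm V) :
    ∏ i ∈ c.support, (x • (1 : Matrix V V R) - G.adjMatrix R) i (c i) =
      (-1) ^ #c.support * if ∀ i ∈ c.support, G.Adj i (c i) then 1 else 0 := by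
  calc ∏ i ∈ c.support, (x • (1 : Matrix V V R) - G.adjMatrix R) i (c i)
      = ∏ i ∈ c.support, -if G.Adj i (c i) then (1 : R) else 0 := by
        refine prod_congr rfl fun i hi => ?_
        simp [Matrix.one_apply_ne (Perm.mem_support.1 hi).symm]
    _ = _ := by rw [prod_neg, prod_boole]; congr

end PermanentalPolynomial

theorem Equiv.Perm.eq_swap_apply_of_card_support_eq_two {c : Perm V} {v : V} (hv : c v ≠ v)
    (h2 : #c.support = 2) : c = swap v (c v) := by
  obtain ⟨x, y, hxy, rfl⟩ := Perm.card_support_eq_two.1 h2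
  rcases eq_or_ne v x with rfl | hvx
  · rw [swap_apply_left]
  rcases eq_or_ne v y with rfl | hvy
  · rw [swap_apply_right, swap_comm]
  · exact absurd (swap_apply_of_ne_of_ne hvx hvy) hv

section CyclePermutations

def subgraphOfPerm (G : SimpleGraph V) (c : Perm V) : G.Subgraph where
  verts := ↑c.support
  Adj x y := (c x = y ∨ c y = x) ∧ G.Adj x y
  adj_sub h := h.2
  edge_vert {x y} h := by
    rcases h.1 with rfl | rfl
    · exact Perm.mem_support.2 h.2.ne'
    · exact Perm.apply_mem_support.2 (Perm.mem_support.2 h.2.ne)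
  symm := ⟨fun _ _ h => ⟨h.1.symm, h.2.symm⟩⟩

variable {G : SimpleGraph V} {c c' : Perm V}

theorem subgraphOfPerm_inv (c : Perm V) : subgraphOfPerm G c⁻¹ = subgraphOfPerm G c := by
  ext x y
  · simp [subgraphOfPerm]
  · simp only [subgraphOfPerm, Perm.inv_eq_iff_eq]
    tauto

def IsCycleAlong (G : SimpleGraph V) (c : Perm V) : Prop :=
  c.IsCycle ∧ 3 ≤ #c.support ∧ ∀ x ∈ c.support, G.Adj x (c x)

namespace IsCycleAlong

theorem inv (hc : IsCycleAlong G c) : IsCycleAlong G c⁻¹ := by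
  refine ⟨hc.1.inv, by rw [Perm.support_inv]; exact hc.2.1, fun x hx => ?_⟩
  rw [Perm.support_inv] at hx
  have hx' : c⁻¹ x ∈ c.support := by
    rwa [← Perm.support_inv, Perm.apply_mem_support, Perm.support_inv]
  simpa using (hc.2.2 _ hx').symm

theorem apply_apply_ne (hc : IsCycleAlong G c) {x : V} (hx : x ∈ c.support) : c (c x) ≠ x := by
  intro h
  have hsq : c ^ 2 = 1 := (hc.1.pow_eq_one_iff' (Perm.mem_support.1 hx)).2 (by simpa [sq])
  have := Nat.le_of_dvd two_pos (orderOf_dvd_of_pow_eq_one hsq)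
  rw [hc.1.orderOf] at this
  exact absurd hc.2.1 (by omega)

theorem neighborSet_subgraphOfPerm (hc : IsCycleAlong G c) {x : V} (hx : x ∈ c.support) :
    (subgraphOfPerm G c).neighborSet x = {c x, c⁻¹ x} := by
  ext y
  simp only [SimpleGraph.Subgraph.mem_neighborSet, subgraphOfPerm, Set.mem_insert_iff,
    Set.mem_singleton_iff, eq_comm (a := y), Perm.inv_eq_iff_eq, eq_comm (a := x)]
  refine ⟨And.left, fun h => ⟨h, ?_⟩⟩
  rcases h with rfl | rfl
  · exact hc.2.2 x hx
  · exact (hc.2.2 y (Perm.apply_mem_support.1 hx)).symm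

theorem connected_subgraphOfPerm (hc : IsCycleAlong G c) : (subgraphOfPerm G c).Connected := by
  obtain ⟨v, hv, -⟩ := hc.1
  have hvs : v ∈ c.support := Perm.mem_support.2 hv
  have hreach : ∀ k : ℕ, (subgraphOfPerm G c).coe.Reachable ⟨v, hvs⟩
      ⟨(c ^ k) v, Perm.pow_apply_mem_support.2 hvs⟩ := by
    intro k
    induction k with
    | zero => simp only [pow_zero, Perm.one_apply]; rfl
    | succ k ih =>
      refine ih.trans (SimpleGraph.Adj.reachable ?_)
      simp only [SimpleGraph.Subgraph.coe_adj, pow_succ', Perm.mul_apply]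
      exact ⟨Or.inl rfl, hc.2.2 _ (Perm.pow_apply_mem_support.2 hvs)⟩
  refine (SimpleGraph.Subgraph.connected_iff.2 ⟨?_, ⟨v, hvs⟩⟩)
  rw [SimpleGraph.Subgraph.preconnected_iff]
  rintro ⟨x, hx⟩ ⟨y, hy⟩
  obtain ⟨i, rfl⟩ := hc.1.exists_pow_eq hv (Perm.mem_support.1 hx)
  obtain ⟨j, rfl⟩ := hc.1.exists_pow_eq hv (Perm.mem_support.1 hy)
  exact (hreach i).symm.trans (hreach j)

theorem isCycleSub (hc : IsCycleAlong G c) : IsCycleSub G (subgraphOfPerm G c) := by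
  refine ⟨hc.connected_subgraphOfPerm, hc.1.nonempty_support, fun x hx => ?_⟩
  rw [hc.neighborSet_subgraphOfPerm hx]
  refine Set.ncard_pair fun h => hc.apply_apply_ne hx ?_
  rw [h]
  simp

theorem eq_of_subgraphOfPerm_eq (hc : IsCycleAlong G c) (hc' : IsCycleAlong G c')
    (h : subgraphOfPerm G c' = subgraphOfPerm G c) {v : V} (hv : v ∈ c.support)
    (hcv : c' v = c v) : c' = c := by
  have hsupp : c'.support = c.support := Finset.coe_injective congr(($h).verts)
  have hnext : ∀ x ∈ c.support, c' x = c x ∨ c (c' x) = x := by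
    intro x hx
    have hadj : (subgraphOfPerm G c').Adj x (c' x) := ⟨Or.inl rfl, hc'.2.2 x (hsupp ▸ hx)⟩
    rw [h] at hadj
    exact hadj.1.imp_left Eq.symm
  have hpow : ∀ k : ℕ, c' ((c ^ k) v) = c ((c ^ k) v) := by
    intro k
    induction k with
    | zero => simpa using hcv
    | succ k ih =>
      have hk : (c ^ k) v ∈ c.support := Perm.pow_apply_mem_support.2 hv
      rw [pow_succ', Perm.mul_apply]
      refine (hnext _ (Perm.apply_mem_support.2 hk)).resolve_right fun hback => ?_
      refine hc'.apply_apply_ne (hsupp ▸ hk) ?_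
      rw [ih]
      exact c.injective hback
  ext x
  by_cases hx : x ∈ c.support
  · obtain ⟨k, rfl⟩ := hc.1.exists_pow_eq (Perm.mem_support.1 hv) (Perm.mem_support.1 hx)
    exact hpow k
  · rw [Perm.notMem_support.1 hx, Perm.notMem_support.1 (hsupp ▸ hx)]

end IsCycleAlong

theorem SimpleGraph.Walk.IsCycle.exists_isCycle_perm {H : SimpleGraph V} {u : V}
    {p : H.Walk u u} (hp : p.IsCycle) :
    ∃ c : Perm V, c.IsCycle ∧ #c.support = p.length ∧
      ∀ x y, p.toSubgraph.Adj x y ↔ (c x = y ∨ c y = x) ∧ x ≠ y := by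
  set l := p.support.tail
  have hl : l.Nodup := hp.support_nodup
  have hlen : l.length = p.length := by simp [l]
  have h3 := hp.three_le_length
  have hget : ∀ j (hj : j < l.length), l[j] = p.getVert (j + 1) := by
    intro j hj
    simp [l, SimpleGraph.Walk.support_getElem_eq_getVert]
  have hstep : ∀ i < p.length, l.formPerm (p.getVert i) = p.getVert (i + 1) := by
    intro i hi
    rcases Nat.eq_zero_or_pos i with rfl | hi0
    · have := List.formPerm_apply_getElem l hl (p.length - 1) (by omega)
      rw [hget, hget, Nat.sub_add_cancel hi, hlen, Nat.mod_self,
        SimpleGraph.Walk.getVert_length] at this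
      simpa using this
    · have := List.formPerm_apply_getElem l hl (i - 1) (by omega)
      rwa [hget, hget, Nat.sub_add_cancel hi0, Nat.mod_eq_of_lt (by omega)] at this
  have hadj : ∀ x, l.formPerm x ≠ x → p.toSubgraph.Adj x (l.formPerm x) := by
    intro x hx
    obtain ⟨n, rfl, hn⟩ := SimpleGraph.Walk.mem_support_iff_exists_getVert.1
      (List.mem_of_mem_tail (List.mem_of_formPerm_apply_ne hx))
    obtain ⟨i, hi, hin⟩ : ∃ i < p.length, p.getVert i = p.getVert n := by
      rcases hn.lt_or_eq with hn | rfl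
      · exact ⟨n, hn, rfl⟩
      · exact ⟨0, by omega, by simp⟩
    rw [← hin, hstep i hi]
    exact p.toSubgraph_adj_getVert hi
  refine ⟨l.formPerm, List.isCycle_formPerm hl (by omega), ?_, fun x y => ⟨fun h => ?_, ?_⟩⟩
  · have hne : ∀ x, l ≠ [x] := fun x h => by
      have := congrArg List.length h
      simp only [hlen, List.length_singleton] at this
      omega
    rw [List.support_formPerm_of_nodup l hl hne, List.toFinset_card_of_nodup hl, hlen]
  · obtain ⟨i, hxy, hi⟩ := (SimpleGraph.Walk.toSubgraph_adj_iff p).1 h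
    refine ⟨?_, h.ne⟩
    rcases Sym2.eq_iff.1 hxy with ⟨rfl, rfl⟩ | ⟨rfl, rfl⟩
    exacts [Or.inl (hstep i hi), Or.inr (hstep i hi)]
  · rintro ⟨rfl | rfl, hxy⟩
    · exact hadj x hxy.symm
    · exact (hadj y hxy).symm

theorem IsCycleSub.exists_isCycleAlong {C : G.Subgraph} (hC : IsCycleSub G C) {v : V}
    (hv : v ∈ C.verts) : ∃ c : Perm V, IsCycleAlong G c ∧ subgraphOfPerm G c = C := by
  obtain ⟨hconn, -, hdeg⟩ := hC
  have hcyc : C.spanningCoe.IsCycles := fun x ⟨_, hy⟩ => hdeg x (C.edge_vert hy)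
  have hnb : (C.spanningCoe.neighborSet v).Nonempty :=
    Set.nonempty_of_ncard_ne_zero (s := C.neighborSet v) (by rw [hdeg v hv]; simp)
  obtain ⟨p, hp, hpverts⟩ := hcyc.exists_cycle_toSubgraph_verts_eq_connectedComponentSupp
    (c := C.spanningCoe.connectedComponentMk v) rfl hnb
  have hverts : ∀ x ∈ C.verts, x ∈ p.toSubgraph.verts := by
    intro x hx
    rw [hpverts, SimpleGraph.ConnectedComponent.mem_supp_iff, SimpleGraph.ConnectedComponent.eq]
    exact (hconn ⟨x, hx⟩ ⟨v, hv⟩).map C.coeEmbeddingSpanningCoe.toHom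
  obtain ⟨c, hc, hcard, hpadj⟩ := hp.exists_isCycle_perm
  have hCadj : ∀ x y, C.Adj x y ↔ (c x = y ∨ c y = x) ∧ x ≠ y := fun x y =>
    Iff.trans ⟨fun h => (hp.adj_toSubgraph_iff_of_isCycles hcyc (hverts x h.fst_mem) y).2 h,
      fun h => h.adj_sub⟩ (hpadj x y)
  have hmem : ∀ x, x ∈ c.support ↔ x ∈ C.verts := by
    refine fun x => ⟨fun hx => ((hCadj x (c x)).2 ⟨Or.inl rfl, ?_⟩).fst_mem, fun hx => ?_⟩
    · exact (Perm.mem_support.1 hx).symm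
    obtain ⟨y, hy⟩ :=
      Set.nonempty_of_ncard_ne_zero (s := C.neighborSet x) (by rw [hdeg x hx]; simp)
    obtain ⟨rfl | rfl, hxy⟩ := (hCadj x y).1 hy
    · exact Perm.mem_support.2 hxy.symm
    · exact Perm.mem_support.2 fun h => hxy (c.injective h)
  refine ⟨c, ⟨hc, hcard ▸ hp.three_le_length, fun x hx => ?_⟩, ?_⟩
  · exact C.adj_sub ((hCadj x _).2 ⟨Or.inl rfl, (Perm.mem_support.1 hx).symm⟩)
  ext x y
  · exact hmem x
  · show (c x = y ∨ c y = x) ∧ G.Adj x y ↔ C.Adj x y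
    rw [hCadj]
    exact ⟨fun h => ⟨h.1, h.2.ne⟩, fun h => ⟨h.1, C.adj_sub ((hCadj x y).2 h)⟩⟩

theorem IsCycleAlong.filter_subgraphOfPerm_eq (hc : IsCycleAlong G c) {v : V}
    (hv : v ∈ c.support) :
    {c' ∈ univ.filter (fun c' => IsCycleAlong G c' ∧ v ∈ c'.support) |
      subgraphOfPerm G c' = subgraphOfPerm G c} = {c, c⁻¹} := by
  ext c'
  simp only [mem_filter, mem_univ, true_and, mem_insert, mem_singleton]
  constructor
  · rintro ⟨⟨hc', hv'⟩, h⟩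
    have hadj : (subgraphOfPerm G c').Adj v (c' v) := ⟨Or.inl rfl, hc'.2.2 v hv'⟩
    rw [h] at hadj
    rcases hadj.1 with hcv | hcv
    · exact Or.inl (hc.eq_of_subgraphOfPerm_eq hc' h hv hcv.symm)
    · refine Or.inr (hc.inv.eq_of_subgraphOfPerm_eq hc' (h.trans (subgraphOfPerm_inv c).symm)
        (c.support_inv ▸ hv) ?_)
      rw [Perm.eq_inv_iff_eq, hcv]
  · rintro (rfl | rfl)
    · exact ⟨⟨hc, hv⟩, rfl⟩
    · exact ⟨⟨hc.inv, by rwa [Perm.support_inv]⟩, subgraphOfPerm_inv _⟩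

theorem sum_isCycleAlong_eq_two_nsmul_finsum {M : Type*} [AddCommMonoid M]
    (G : SimpleGraph V) (v : V) (g : Set V → M) :
    ∑ c ∈ univ.filter (fun c => IsCycleAlong G c ∧ v ∈ c.support), g ↑c.support =
      2 • ∑ᶠ C ∈ {C : G.Subgraph | IsCycleSub G C ∧ v ∈ C.verts}, g C.verts := by
  have hfin := Set.toFinite {C : G.Subgraph | IsCycleSub G C ∧ v ∈ C.verts}
  have hmaps : ∀ c ∈ univ.filter (fun c => IsCycleAlong G c ∧ v ∈ c.support),
      subgraphOfPerm G c ∈ hfin.toFinset := by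
    intro c hc
    obtain ⟨hc, hv⟩ := (mem_filter.1 hc).2
    exact hfin.mem_toFinset.2 ⟨hc.isCycleSub, hv⟩
  rw [finsum_mem_eq_finite_toFinset_sum _ hfin, smul_sum, ← sum_fiberwise_of_maps_to hmaps]
  refine sum_congr rfl fun C hC => ?_
  obtain ⟨hC, hv⟩ := hfin.mem_toFinset.1 hC
  obtain ⟨c, hc, rfl⟩ := hC.exists_isCycleAlong hv
  have hvc : v ∈ c.support := hv
  have hne : c ≠ c⁻¹ := fun h => hc.apply_apply_ne hvc (by nth_rewrite 1 [h]; simp)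
  rw [hc.filter_subgraphOfPerm_eq hvc, sum_pair hne, two_nsmul, Perm.support_inv]
  rfl

end CyclePermutations

section VertexExpansion

variable {R : Type*} [CommRing R]

theorem psi_eq_sum_cycleOf (A : Matrix V V R[X]) (v : V) :
    psi A = ∑ c ∈ insert 1 (cyclesThrough v),
      (∏ i ∈ insert v c.support, ((X : R[X]) • (1 : Matrix V V R[X]) - A) i (c i)) *
        psi (delSub A ↑(insert v c.support)) := by
  rw [psi, per_eq_sum_cycleOf _ v]
  exact sum_congr rfl fun c _ => congrArg _ (psi_delSub A _).symm

variable (G : SimpleGraph V) [DecidableRel G.Adj] (v : V)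

theorem psi_adjMatrix_eq_add_sum :
    psi (G.adjMatrix R[X]) = X * psi (delSub (G.adjMatrix R[X]) {v}) +
      ∑ c ∈ cyclesThrough v,
        (-1) ^ #c.support * ((if ∀ i ∈ c.support, G.Adj i (c i) then 1 else 0) *
          psi (delSub (G.adjMatrix R[X]) ↑c.support)) := by
  rw [psi_eq_sum_cycleOf _ v, sum_insert (by simp [mem_cyclesThrough, Perm.not_isCycle_one])]
  congr 1
  · simp only [Perm.support_one, insert_empty, prod_singleton, Perm.one_apply]
    congr 1
    · simp
    · exact psi_delSub_congr _ (by simp)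
  · refine sum_congr rfl fun c hc => ?_
    rw [insert_eq_of_mem (Perm.mem_support.2 (mem_cyclesThrough.1 hc).2),
      prod_smul_one_sub_adjMatrix_apply, mul_assoc]

theorem sum_transpositions_eq_sum_neighborFinset :
    ∑ c ∈ cyclesThrough v with #c.support = 2,
        (-1) ^ #c.support * ((if ∀ i ∈ c.support, G.Adj i (c i) then 1 else 0) *
          psi (delSub (G.adjMatrix R[X]) ↑c.support)) =
      ∑ u ∈ G.neighborFinset v, psi (delSub (G.adjMatrix R[X]) {u, v}) := by
  have hN : G.neighborFinset v = (univ.erase v).filter (G.Adj v) := by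
    ext u
    simp only [SimpleGraph.mem_neighborFinset, mem_filter, mem_erase, mem_univ, and_true]
    exact ⟨fun h => ⟨h.ne', h⟩, And.right⟩
  rw [hN, sum_filter (G.Adj v)]
  refine sum_nbij' (· v) (swap v) ?_ ?_ ?_ ?_ ?_
  · intro c hc
    simp only [mem_filter, mem_cyclesThrough] at hc
    exact mem_erase.2 ⟨hc.1.2, mem_univ _⟩
  · intro u hu
    have hvu : v ≠ u := (ne_of_mem_erase hu).symm
    simp only [mem_filter, mem_cyclesThrough]
    exact ⟨⟨Perm.isCycle_swap hvu, by rwa [swap_apply_left, ne_comm]⟩, Perm.card_support_swap hvu⟩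
  · intro c hc
    simp only [mem_filter, mem_cyclesThrough] at hc
    exact (Perm.eq_swap_apply_of_card_support_eq_two hc.1.2 hc.2).symm
  · intro u _
    exact swap_apply_left v u
  · intro c hc
    simp only [mem_filter, mem_cyclesThrough] at hc
    obtain ⟨⟨-, hcv⟩, h2⟩ := hc
    have hswap := Perm.eq_swap_apply_of_card_support_eq_two hcv h2
    generalize c v = u at hswap hcv ⊢
    subst hswap
    rw [Perm.support_swap (Ne.symm hcv), card_pair (Ne.symm hcv)]
    by_cases h : G.Adj v u
    · simp only [h, h.symm, mem_insert, mem_singleton, forall_eq_or_imp, forall_eq,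
        swap_apply_left, swap_apply_right]
      simpa using psi_delSub_congr _ (by rw [coe_pair, Set.pair_comm])
    · simp [h]

theorem sum_long_cycles_eq_two_mul_finsum :
    ∑ c ∈ cyclesThrough v with ¬#c.support = 2,
        (-1) ^ #c.support * ((if ∀ i ∈ c.support, G.Adj i (c i) then 1 else 0) *
          psi (delSub (G.adjMatrix R[X]) ↑c.support)) =
      2 * ∑ᶠ C ∈ {C : G.Subgraph | IsCycleSub G C ∧ v ∈ C.verts},
        (-1) ^ C.verts.ncard * psi (delSub (G.adjMatrix R[X]) C.verts) := by
  have hfilter : ((cyclesThrough v).filter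
      (¬#·.support = 2)).filter (fun c => ∀ i ∈ c.support, G.Adj i (c i)) =
        univ.filter (fun c => IsCycleAlong G c ∧ v ∈ c.support) := by
    ext c
    simp only [mem_filter, mem_univ, true_and, mem_cyclesThrough, IsCycleAlong, Perm.mem_support]
    constructor
    · rintro ⟨⟨⟨hc, hv⟩, h2⟩, hadj⟩
      exact ⟨⟨hc, by have := hc.two_le_card_support; omega, hadj⟩, hv⟩
    · rintro ⟨⟨hc, h3, hadj⟩, hv⟩
      exact ⟨⟨⟨hc, hv⟩, by omega⟩, hadj⟩
  rw [two_mul, ← two_nsmul]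
  refine Eq.trans ?_ (sum_isCycleAlong_eq_two_nsmul_finsum G v
    fun S => (-1) ^ S.ncard * psi (delSub (G.adjMatrix R[X]) S))
  rw [← hfilter, sum_filter (fun c : Perm V => ∀ i ∈ c.support, G.Adj i (c i))]
  refine sum_congr rfl fun c _ => ?_
  split_ifs
  · rw [Set.ncard_coe_finset, one_mul, psi_delSub_congr _ rfl]
  · rw [zero_mul, mul_zero]

end VertexExpansion

theorem adjacency_permanental_vertex_recursion
    {V : Type*} [Fintype V] [DecidableEq V]
    (G : SimpleGraph V) [DecidableRel G.Adj] (v : V) :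
    psi (G.adjMatrix (Polynomial ℤ)) =
      Polynomial.X * psi (delSub (G.adjMatrix (Polynomial ℤ)) {v})
        + ∑ u ∈ G.neighborFinset v, psi (delSub (G.adjMatrix (Polynomial ℤ)) {u, v})
        + 2 * ∑ᶠ C ∈ {C : G.Subgraph | IsCycleSub G C ∧ v ∈ C.verts},
          (-1 : Polynomial ℤ) ^ C.verts.ncard * psi (delSub (G.adjMatrix (Polynomial ℤ)) C.verts) := by
  rw [psi_adjMatrix_eq_add_sum G v, ← sum_filter_add_sum_filter_not _ (#·.support = 2),
    sum_transpositions_eq_sum_neighborFinset, sum_long_cycles_eq_two_mul_finsum, add_assoc]
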